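/- arXiv:2002.01776 — 6 statements merged into one kernel-verified Lean document; each statement's English description precedes it below -/
import Mathlib

section
/- Every natural distance metric on subsets of a finite set A is majority-concentric: for every k-subset U ⊆ A, every a ∈ U and b ∉ U, and every threshold value t ≥ 0, the number of subsets S ⊆ A with a ∈ S, b ∉ S, and d(U,S) ≤ t is at least the number of subsets S ⊆ A with b ∈ S, a ∉ S, and d(U,S) ≤ t. -/
/-- `d` is a distance metric on subsets of the finite set of alternatives. -/
def IsMetric {α : Type*} (d : Finset α → Finset α → ℝ) : Prop :=
  (∀ X Y, 0 ≤ d X Y) ∧ (∀ X Y, d X Y = 0 ↔ X = Y) ∧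
  (∀ X Y, d X Y = d Y X) ∧ (∀ X Y Z, d X Z ≤ d X Y + d Y Z)

/-- `d` is natural: equal-sized sets sharing more alternatives with `S` are not farther from `S`. -/
def IsNatural {α : Type*} [DecidableEq α] (d : Finset α → Finset α → ℝ) : Prop :=
  ∀ U V S : Finset α, U.card = V.card → (V ∩ S).card < (U ∩ S).card → d U S ≤ d V S

/-!
Trading `b` for `a`, `S ↦ insert a (S.erase b)`, maps the sets containing `b` but not `a`
injectively to the sets containing `a` but not `b`. It keeps the size of `S` and, since
`a ∈ U` and `b ∉ U`, adds one element to `S ∩ U`; so for a natural metric it does not move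
`S` farther from `U`, and the image of the first neighbourhood lies in the second.
-/

namespace Finset

variable {α : Type*} [DecidableEq α] {a b : α} {S U : Finset α}

theorem card_insert_erase_of_mem_of_notMem (hb : b ∈ S) (ha : a ∉ S) :
    (insert a (S.erase b)).card = S.card := by
  rw [card_insert_of_notMem fun h => ha (mem_of_mem_erase h), card_erase_add_one hb]

theorem card_insert_erase_inter (haU : a ∈ U) (hbU : b ∉ U) (ha : a ∉ S) :
    (insert a (S.erase b) ∩ U).card = (S ∩ U).card + 1 := by
  have hb : b ∉ S ∩ U := fun h => hbU (mem_inter.mp h).2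
  rw [insert_inter_of_mem haU, erase_inter, erase_eq_of_notMem hb,
    card_insert_of_notMem fun h => ha (mem_inter.mp h).1]

theorem insert_erase_insert_erase (hb : b ∈ S) (ha : a ∉ S) :
    insert b ((insert a (S.erase b)).erase a) = S := by
  rw [erase_insert fun h => ha (mem_of_mem_erase h), insert_erase hb]

end Finset

theorem IsNatural.dist_le_of_card_inter_lt {α : Type*} [DecidableEq α]
    {d : Finset α → Finset α → ℝ} (hnat : IsNatural d) (hsymm : ∀ X Y, d X Y = d Y X)
    {U V W : Finset α} (hcard : V.card = W.card) (hinter : (W ∩ U).card < (V ∩ U).card) :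
    d U V ≤ d U W := by
  rw [hsymm U V, hsymm U W]
  exact hnat V W U hcard hinter

theorem stmt6 {α : Type*} [Fintype α] [DecidableEq α] (d : Finset α → Finset α → ℝ)
    (hmetric : IsMetric d) (hnat : IsNatural d) :
    -- majority-concentricity
    ∀ (U : Finset α) (a b : α), a ∈ U → b ∉ U → ∀ t : ℝ, 0 ≤ t →
      {S : Finset α | b ∈ S ∧ a ∉ S ∧ d U S ≤ t}.ncard ≤
        {S : Finset α | a ∈ S ∧ b ∉ S ∧ d U S ≤ t}.ncard := by
  intro U a b haU hbU t _
  have hab : a ≠ b := fun h => hbU (h ▸ haU)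
  refine Set.ncard_le_ncard_of_injOn (fun S => insert a (S.erase b)) ?_ ?_
  · rintro S ⟨hbS, haS, hdist⟩
    refine ⟨Finset.mem_insert_self a _, fun h => ?_, ?_⟩
    · exact hab.symm ((Finset.mem_insert.mp h).resolve_right (Finset.notMem_erase b S))
    · refine le_trans (hnat.dist_le_of_card_inter_lt hmetric.2.2.1
        (Finset.card_insert_erase_of_mem_of_notMem hbS haS) ?_) hdist
      rw [Finset.card_insert_erase_inter haU hbU haS]
      exact Nat.lt_succ_self _
  · refine Set.LeftInvOn.injOn (f₁' := fun T => insert b (T.erase a)) ?_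
    rintro S ⟨hbS, haS, -⟩
    exact Finset.insert_erase_insert_erase hbS haS
end

section
/- On the set A = {a, b, c} of three alternatives, define d(X,Y) = 0 if X = Y, d(X,Y) = 1 if X ∩ Y = ∅ and X ∪ Y = A, and d(X,Y) = 2 otherwise. Then d is a metric on subsets of A that is majority-concentric but not natural. -/
/-!
Off the diagonal `dEx` takes values in `[1, 2]`, which alone gives the triangle inequality.
For majority-concentricity at a radius `t < 2`, the only set other than `U` within distance `t`
of `U` is `Uᶜ`, so the side of `b` gets at most one set while `U` itself lies on the side of `a`;
from radius `2` on, both sides are all sets, which the transposition of `a` and `b` matches up.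
Naturality fails because `{2}` is the complement of `{0, 1}` while `{0}` is not, although
`{0}` meets `{0, 1}` and `{2}` does not.
-/

/-- The distance on subsets of a three-element set: `0` if equal, `1` if the two sets are
disjoint and cover everything, `2` otherwise. -/
def dEx (X Y : Finset (Fin 3)) : ℝ :=
  if X = Y then 0 else if X ∩ Y = ∅ ∧ X ∪ Y = Finset.univ then 1 else 2

/-- `d` is majority-concentric. -/
def IsMajorityConcentric {α : Type*} [Fintype α] [DecidableEq α]
    (d : Finset α → Finset α → ℝ) : Prop :=
  ∀ (U : Finset α) (a b : α), a ∈ U → b ∉ U → ∀ t : ℝ, 0 ≤ t →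
    {S : Finset α | b ∈ S ∧ a ∉ S ∧ d U S ≤ t}.ncard ≤
      {S : Finset α | a ∈ S ∧ b ∉ S ∧ d U S ≤ t}.ncard

lemma isMetric_of_mem_Icc_one_two {α : Type*} (d : Finset α → Finset α → ℝ)
    (h_self : ∀ X, d X X = 0) (h_comm : ∀ X Y, d X Y = d Y X)
    (h_ne : ∀ X Y, X ≠ Y → d X Y ∈ Set.Icc 1 2) : IsMetric d := by
  have nonneg : ∀ X Y, 0 ≤ d X Y := fun X Y => by
    rcases eq_or_ne X Y with rfl | h
    · exact (h_self X).ge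
    · linarith [(h_ne X Y h).1]
  refine ⟨nonneg, fun X Y => ⟨fun h => ?_, fun h => h ▸ h_self X⟩, h_comm, fun X Y Z => ?_⟩
  · by_contra hXY
    linarith [(h_ne X Y hXY).1]
  · rcases eq_or_ne X Y with rfl | hXY
    · simp [h_self]
    rcases eq_or_ne Y Z with rfl | hYZ
    · simp [h_self]
    rcases eq_or_ne X Z with rfl | hXZ
    · linarith [h_self X, nonneg X Y, nonneg Y X]
    linarith [(h_ne X Z hXZ).2, (h_ne X Y hXY).1, (h_ne Y Z hYZ).1]

lemma dEx_eq_ite (X Y : Finset (Fin 3)) :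
    dEx X Y = if X = Y then 0 else if Y = Xᶜ then 1 else 2 := by
  have h_compl : X ∩ Y = ∅ ∧ X ∪ Y = Finset.univ ↔ Y = Xᶜ := by
    rw [eq_compl_iff_isCompl, isCompl_comm, isCompl_iff, Finset.disjoint_iff_inter_eq_empty,
      codisjoint_iff]
    rfl
  simp only [dEx, h_compl]

lemma dEx_self (X : Finset (Fin 3)) : dEx X X = 0 := by simp [dEx]

lemma dEx_comm (X Y : Finset (Fin 3)) : dEx X Y = dEx Y X := by
  simp only [dEx_eq_ite, eq_comm (a := X), eq_compl_comm (x := Y)]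

lemma dEx_mem_Icc_of_ne {X Y : Finset (Fin 3)} (h : X ≠ Y) : dEx X Y ∈ Set.Icc 1 2 := by
  rw [dEx_eq_ite, if_neg h]
  split_ifs <;> norm_num

lemma dEx_le_two (X Y : Finset (Fin 3)) : dEx X Y ≤ 2 := by
  rcases eq_or_ne X Y with rfl | h
  · norm_num [dEx_self]
  · exact (dEx_mem_Icc_of_ne h).2

lemma eq_or_eq_compl_of_dEx_lt_two {X Y : Finset (Fin 3)} (h : dEx X Y < 2) :
    Y = X ∨ Y = Xᶜ := by
  rw [dEx_eq_ite] at h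
  split_ifs at h with h₁ h₂
  exacts [.inl h₁.symm, .inr h₂, absurd h (lt_irrefl 2)]

lemma isMetric_dEx : IsMetric dEx :=
  isMetric_of_mem_Icc_one_two dEx dEx_self dEx_comm fun _ _ => dEx_mem_Icc_of_ne

lemma ncard_setOf_mem_not_mem_comm {α : Type*} [DecidableEq α] (a b : α) :
    {S : Finset α | b ∈ S ∧ a ∉ S}.ncard = {S : Finset α | a ∈ S ∧ b ∉ S}.ncard := by
  let e := (Equiv.swap a b).finsetCongr
  have : {S : Finset α | b ∈ S ∧ a ∉ S} = e ⁻¹' {S | a ∈ S ∧ b ∉ S} := by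
    ext S
    simp [e, Finset.mem_map_equiv]
  rw [this, Set.ncard_preimage_of_injective_subset_range e.injective (by simp)]

lemma isMajorityConcentric_dEx : IsMajorityConcentric dEx := by
  intro U a b ha hb t _
  rcases le_or_gt 2 t with ht | ht
  · have hall : ∀ S, dEx U S ≤ t := fun S => (dEx_le_two U S).trans ht
    simpa only [hall, and_true] using (ncard_setOf_mem_not_mem_comm a b).le
  set L := {S : Finset (Fin 3) | b ∈ S ∧ a ∉ S ∧ dEx U S ≤ t}
  rcases L.eq_empty_or_nonempty with hL | ⟨S, -, haS, hS⟩
  · simp [hL]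
  have hU_ne : U ≠ S := fun h => haS (h ▸ ha)
  have hL_sub : L ⊆ {Uᶜ} := by
    rintro S ⟨-, haS, hS⟩
    exact (eq_or_eq_compl_of_dEx_lt_two (hS.trans_lt ht)).resolve_left fun h => haS (h ▸ ha)
  have hU_mem : U ∈ {S : Finset (Fin 3) | a ∈ S ∧ b ∉ S ∧ dEx U S ≤ t} :=
    ⟨ha, hb, by linarith [dEx_self U, (dEx_mem_Icc_of_ne hU_ne).1]⟩
  calc L.ncard ≤ ({Uᶜ} : Set (Finset (Fin 3))).ncard := Set.ncard_le_ncard hL_sub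
    _ = 1 := Set.ncard_singleton _
    _ ≤ _ := Nat.one_le_iff_ne_zero.2 (Set.ncard_ne_zero_of_mem hU_mem)

lemma not_isNatural_dEx : ¬ IsNatural dEx := by
  intro h
  have := h {0} {2} {0, 1} rfl (by decide)
  rw [dEx_eq_ite, dEx_eq_ite, if_neg (by decide), if_neg (by decide), if_neg (by decide),
    if_pos (by decide)] at this
  norm_num at this

theorem stmt7 : IsMetric dEx ∧ IsMajorityConcentric dEx ∧ ¬ IsNatural dEx :=
  ⟨isMetric_dEx, isMajorityConcentric_dEx, not_isNatural_dEx⟩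
end

section
/- The Zelinka distance d_Z(X,Y) = max(|X \ Y|, |Y \ X|) is a similarity distance metric: for all subsets U, V, S of a finite set A with |U| = |V| and |U ∩ S| > |V ∩ S|, it holds that d_Z(U,S) < d_Z(V,S). -/
/-- Zelinka (maximum difference) distance between finite sets. -/
def dZelinka {α : Type*} [DecidableEq α] (X Y : Finset α) : ℕ :=
  max (X \ Y).card (Y \ X).card

theorem stmt9 {α : Type*} [DecidableEq α] (U V S : Finset α)
    (hcard : U.card = V.card) (h : (V ∩ S).card < (U ∩ S).card) :
    dZelinka U S < dZelinka V S := by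
  have h1 := Finset.card_inter_add_card_sdiff U S
  have h2 := Finset.card_inter_add_card_sdiff V S
  have h3 := Finset.card_inter_add_card_sdiff S U
  have h4 := Finset.card_inter_add_card_sdiff S V
  have e1 : (S ∩ U).card = (U ∩ S).card := by rw [Finset.inter_comm]
  have e2 : (S ∩ V).card = (V ∩ S).card := by rw [Finset.inter_comm]
  simp only [dZelinka]
  omega
end

section
/- Let P be a d-monotonic probability distribution over subsets of a finite set A with ground truth a k-subset U, where d is a natural distance metric. Let f : ℕ × ℕ → ℝ be nondecreasing in its first argument, and define sc(W,S) = f(|W ∩ S|, |S|). Then for any k-subset V ≠ U and any (U,V)-bijection μ, E_{S∼P}[sc(U,S) − sc(V,S)] = Σ_{S : |U∩S| > |V∩S|} (sc(U,S) − sc(V,S))·(P[S] − P[μ(S)]), and this quantity is nonnegative; moreover it is strictly positive if there exists S with |U∩S| > |V∩S|, sc(U,S) > sc(V,S), and d(U,S) < d(U,μ(S)). -/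
/-- `P` is a probability distribution over subsets. -/
def IsProbDist {α : Type*} [Fintype α] [DecidableEq α] (P : Finset α → ℝ) : Prop :=
  (∀ S, 0 ≤ P S) ∧ (∑ S : Finset α, P S = 1)

/-- `P` is `d`-monotonic with ground truth `U`. -/
def IsMonotonicNoise {α : Type*} (d : Finset α → Finset α → ℝ) (U : Finset α)
    (P : Finset α → ℝ) : Prop :=
  ∀ S₁ S₂ : Finset α, P S₂ < P S₁ ↔ d U S₁ < d U S₂

/-- `μ'` is a `(U,V)`-bijection on alternatives. -/
def IsUVBijection {α : Type*} [DecidableEq α] (U V : Finset α) (μ' : α ≃ α) : Prop :=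
  (∀ a ∈ U ∩ V, μ' a = a) ∧ (∀ a ∉ U ∪ V, μ' a = a) ∧
  (∀ a ∈ U \ V, μ' a ∈ V \ U) ∧ (∀ a ∈ V \ U, μ' a ∈ U \ V)

lemma uvb_symm {α : Type*} [DecidableEq α] {U V : Finset α} {μ' : α ≃ α}
    (hμ : IsUVBijection U V μ') : IsUVBijection V U μ' := by
  obtain ⟨h1, h2, h3, h4⟩ := hμ
  exact ⟨fun a ha => h1 a (by rwa [Finset.inter_comm]),
    fun a ha => h2 a (by rwa [Finset.union_comm]), h4, h3⟩

lemma uvb_image {α : Type*} [DecidableEq α] {U V : Finset α} {μ' : α ≃ α}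
    (hcard : U.card = V.card) (hμ : IsUVBijection U V μ') : U.image μ' = V := by
  apply Finset.eq_of_subset_of_card_le
  · intro a ha
    obtain ⟨b, hb, rfl⟩ := Finset.mem_image.mp ha
    by_cases hbv : b ∈ V
    · rw [hμ.1 b (Finset.mem_inter.mpr ⟨hb, hbv⟩)]; exact hbv
    · exact (Finset.mem_sdiff.mp (hμ.2.2.1 b (Finset.mem_sdiff.mpr ⟨hb, hbv⟩))).1
  · rw [Finset.card_image_of_injective _ μ'.injective, hcard]

lemma uvb_card {α : Type*} [DecidableEq α] {U V : Finset α} {μ' : α ≃ α}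
    (hcard : U.card = V.card) (hμ : IsUVBijection U V μ') (S : Finset α) :
    (V ∩ S.image μ').card = (U ∩ S).card := by
  rw [← uvb_image hcard hμ, ← Finset.image_inter _ _ μ'.injective,
    Finset.card_image_of_injective _ μ'.injective]

theorem stmt13 {α : Type*} [Fintype α] [DecidableEq α] (k : ℕ)
    (d : Finset α → Finset α → ℝ) (hmetric : IsMetric d) (hnat : IsNatural d)
    (U : Finset α) (hU : U.card = k) (P : Finset α → ℝ)
    (hP : IsProbDist P) (hmono : IsMonotonicNoise d U P)
    (f : ℕ → ℕ → ℝ) (hf : ∀ y x₁ x₂, x₁ ≤ x₂ → f x₁ y ≤ f x₂ y)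
    (sc : Finset α → Finset α → ℝ) (hsc : ∀ W S, sc W S = f (W ∩ S).card S.card)
    (V : Finset α) (hV : V.card = k) (hne : V ≠ U)
    (μ' : α ≃ α) (hμ : IsUVBijection U V μ') :
    (∑ S : Finset α, (sc U S - sc V S) * P S =
      ∑ S ∈ Finset.univ.filter (fun S : Finset α => (V ∩ S).card < (U ∩ S).card),
        (sc U S - sc V S) * (P S - P (S.image μ'))) ∧
    0 ≤ ∑ S : Finset α, (sc U S - sc V S) * P S ∧
    ((∃ S : Finset α, (V ∩ S).card < (U ∩ S).card ∧ sc V S < sc U S ∧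
        d U S < d U (S.image μ')) →
      0 < ∑ S : Finset α, (sc U S - sc V S) * P S) := by
  obtain ⟨hPnn, hPsum⟩ := hP
  have hcard : U.card = V.card := by rw [hU, hV]
  have hμV : IsUVBijection V U μ' := uvb_symm hμ
  have hcV : ∀ S, (V ∩ S.image μ').card = (U ∩ S).card := uvb_card hcard hμ
  have hcU : ∀ S, (U ∩ S.image μ').card = (V ∩ S).card := uvb_card hcard.symm hμV
  have hcardim : ∀ S : Finset α, (S.image μ').card = S.card :=
    fun S => Finset.card_image_of_injective _ μ'.injective
  have himim : ∀ S : Finset α, (S.image μ'.symm).image μ' = S := by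
    intro S
    rw [Finset.image_image]
    simp
  have hcardim' : ∀ S : Finset α, (S.image μ'.symm).card = S.card :=
    fun S => Finset.card_image_of_injective _ μ'.symm.injective
  have hcV' : ∀ S : Finset α, (V ∩ S.image μ'.symm).card = (U ∩ S).card := by
    intro S
    have := hcU (S.image μ'.symm)
    rw [himim S] at this
    omega
  have hcU' : ∀ S : Finset α, (U ∩ S.image μ'.symm).card = (V ∩ S).card := by
    intro S
    have := hcV (S.image μ'.symm)
    rw [himim S] at this
    omega
  -- d U S ≤ d U (μ S) whenever |V∩S| < |U∩S|
  have hdle : ∀ S : Finset α, (V ∩ S).card < (U ∩ S).card → d U S ≤ d U (S.image μ') := by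
    intro S hS
    have h := hnat S (S.image μ') U (hcardim S).symm (by
      rw [Finset.inter_comm (S.image μ') U, Finset.inter_comm S U, hcU S]; exact hS)
    rwa [hmetric.2.2.1 S U, hmetric.2.2.1 (S.image μ') U] at h
  have hPle : ∀ S : Finset α, (V ∩ S).card < (U ∩ S).card → P (S.image μ') ≤ P S := by
    intro S hS
    by_contra h
    push_neg at h
    exact absurd ((hmono (S.image μ') S).mp h) (not_lt.mpr (hdle S hS))
  have hscle : ∀ S : Finset α, (V ∩ S).card < (U ∩ S).card → sc V S ≤ sc U S := by
    intro S hS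
    rw [hsc, hsc]
    exact hf S.card _ _ hS.le
  -- the key sum identity
  have key : ∑ S : Finset α, (sc U S - sc V S) * P S =
      ∑ S ∈ Finset.univ.filter (fun S : Finset α => (V ∩ S).card < (U ∩ S).card),
        (sc U S - sc V S) * (P S - P (S.image μ')) := by
    rw [← Finset.sum_filter_add_sum_filter_not Finset.univ
      (fun S : Finset α => (V ∩ S).card < (U ∩ S).card)
      (fun S => (sc U S - sc V S) * P S)]
    have h2 : ∑ S ∈ Finset.univ.filter
          (fun S : Finset α => ¬ (V ∩ S).card < (U ∩ S).card), (sc U S - sc V S) * P S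
        = ∑ S ∈ Finset.univ.filter (fun S : Finset α => (U ∩ S).card < (V ∩ S).card),
            (sc U S - sc V S) * P S := by
      apply (Finset.sum_subset ?_ ?_).symm
      · intro S hS
        simp only [Finset.mem_filter, Finset.mem_univ, true_and] at *
        omega
      · intro S hS hnS
        simp only [Finset.mem_filter, Finset.mem_univ, true_and] at hS hnS
        have hEq : (U ∩ S).card = (V ∩ S).card := by omega
        rw [hsc, hsc, hEq]
        ring
    rw [h2]
    have h3 : ∑ S ∈ Finset.univ.filter (fun S : Finset α => (U ∩ S).card < (V ∩ S).card),
          (sc U S - sc V S) * P S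
        = ∑ S ∈ Finset.univ.filter (fun S : Finset α => (V ∩ S).card < (U ∩ S).card),
            (sc V S - sc U S) * P (S.image μ') := by
      apply Finset.sum_nbij' (fun S => S.image μ'.symm) (fun S => S.image μ')
      · intro S hS
        simp only [Finset.mem_filter, Finset.mem_univ, true_and] at *
        rw [hcV' S, hcU' S]
        exact hS
      · intro S hS
        simp only [Finset.mem_filter, Finset.mem_univ, true_and] at *
        rw [hcV S, hcU S]
        exact hS
      · intro S _
        exact himim S
      · intro S _
        rw [Finset.image_image]
        simp
      · intro S hS
        rw [himim S, hsc V (S.image μ'.symm), hsc U (S.image μ'.symm), hcV' S, hcU' S,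
          hcardim' S, hsc U S, hsc V S]
    rw [h3, ← Finset.sum_add_distrib]
    apply Finset.sum_congr rfl
    intro S _
    ring
  refine ⟨key, ?_, ?_⟩
  · rw [key]
    apply Finset.sum_nonneg
    intro S hS
    simp only [Finset.mem_filter, Finset.mem_univ, true_and] at hS
    exact mul_nonneg (sub_nonneg.mpr (hscle S hS)) (sub_nonneg.mpr (hPle S hS))
  · rintro ⟨S₀, hS₀, hsc₀, hd₀⟩
    rw [key]
    apply Finset.sum_pos'
    · intro S hS
      simp only [Finset.mem_filter, Finset.mem_univ, true_and] at hS
      exact mul_nonneg (sub_nonneg.mpr (hscle S hS)) (sub_nonneg.mpr (hPle S hS))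
    · refine ⟨S₀, by simp [hS₀], ?_⟩
      have hP0 : P (S₀.image μ') < P S₀ := (hmono S₀ (S₀.image μ')).mpr hd₀
      exact mul_pos (sub_pos.mpr hsc₀) (sub_pos.mpr hP0)
end

section
/- Let d be a similarity distance metric on subsets of a finite set A, and let P be a d-monotonic distribution with ground truth a k-subset U. Let f : ℕ × ℕ → ℝ be nondecreasing in its first argument and non-trivial in the sense that for every pair of distinct k-subsets U, V there exists S ⊆ A with f(|U∩S|,|S|) > f(|V∩S|,|S|). Then for every k-subset V ≠ U, E_{S∼P}[f(|U∩S|,|S|) − f(|V∩S|,|S|)] > 0. -/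
/-- `d` is a similarity distance metric. -/
def IsSimilarity {α : Type*} [DecidableEq α] (d : Finset α → Finset α → ℝ) : Prop :=
  ∀ U V S : Finset α, U.card = V.card → (V ∩ S).card < (U ∩ S).card → d U S < d V S

theorem stmt14 {α : Type*} [Fintype α] [DecidableEq α] (k : ℕ)
    (d : Finset α → Finset α → ℝ) (hmetric : IsMetric d) (hsim : IsSimilarity d)
    (U : Finset α) (hU : U.card = k) (P : Finset α → ℝ)
    (hP : IsProbDist P) (hmono : IsMonotonicNoise d U P)
    (f : ℕ → ℕ → ℝ) (hf : ∀ y x₁ x₂, x₁ ≤ x₂ → f x₁ y ≤ f x₂ y)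
    (hnontrivial : ∀ U' V' : Finset α, U'.card = k → V'.card = k → U' ≠ V' →
      ∃ S : Finset α, f (V' ∩ S).card S.card < f (U' ∩ S).card S.card) :
    ∀ V : Finset α, V.card = k → V ≠ U →
      0 < ∑ S : Finset α, (f (U ∩ S).card S.card - f (V ∩ S).card S.card) * P S := by
  intro V hV hne
  -- the swap involution
  have hcard : (U \ V).card = (V \ U).card :=
    Finset.card_sdiff_comm (hU.trans hV.symm)
  set e := Finset.equivOfCardEq hcard with he
  set p : α → α := fun x =>
    if h : x ∈ U \ V then (e ⟨x, h⟩ : α)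
    else if h : x ∈ V \ U then (e.symm ⟨x, h⟩ : α) else x with hp
  have hdisj : ∀ x, x ∈ U \ V → x ∉ V \ U := by
    intro x hx hx'
    exact (Finset.mem_sdiff.mp hx').2 (Finset.mem_sdiff.mp hx).1
  have hinv : Function.Involutive p := by
    intro x
    by_cases h1 : x ∈ U \ V
    · have hmem : (e ⟨x, h1⟩ : α) ∈ V \ U := (e ⟨x, h1⟩).2
      have hnot : (e ⟨x, h1⟩ : α) ∉ U \ V := fun hc => hdisj _ hc hmem
      simp only [hp, dif_pos h1, dif_neg hnot, dif_pos hmem]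
      have : (⟨(e ⟨x, h1⟩ : α), hmem⟩ : {y // y ∈ V \ U}) = e ⟨x, h1⟩ := rfl
      rw [this, Equiv.symm_apply_apply]
    · by_cases h2 : x ∈ V \ U
      · have hmem : (e.symm ⟨x, h2⟩ : α) ∈ U \ V := (e.symm ⟨x, h2⟩).2
        simp only [hp, dif_neg h1, dif_pos h2, dif_pos hmem]
        have : (⟨(e.symm ⟨x, h2⟩ : α), hmem⟩ : {y // y ∈ U \ V}) = e.symm ⟨x, h2⟩ := rfl
        rw [this, Equiv.apply_symm_apply]
      · simp only [hp, dif_neg h1, dif_neg h2]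
  have hpinj : Function.Injective p := hinv.injective
  -- p maps U to V and V to U
  have hUV : U.image p = V := by
    apply Finset.eq_of_subset_of_card_le
    · intro y hy
      simp only [Finset.mem_image] at hy
      obtain ⟨x, hx, rfl⟩ := hy
      by_cases h1 : x ∈ U \ V
      · have hmem : (e ⟨x, h1⟩ : α) ∈ V \ U := (e ⟨x, h1⟩).2
        simp only [hp, dif_pos h1]
        exact (Finset.mem_sdiff.mp hmem).1
      · have h2 : x ∉ V \ U := fun hc => (Finset.mem_sdiff.mp hc).2 hx
        simp only [hp, dif_neg h1, dif_neg h2]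
        by_contra hc
        exact h1 (Finset.mem_sdiff.mpr ⟨hx, hc⟩)
    · rw [Finset.card_image_of_injective _ hpinj, hU, hV]
  have hVU : V.image p = U := by
    rw [← hUV, Finset.image_image]
    have : p ∘ p = id := funext hinv
    rw [this, Finset.image_id]
  -- key per-S card facts
  have hcardS : ∀ S : Finset α, (S.image p).card = S.card :=
    fun S => Finset.card_image_of_injective _ hpinj
  have hUc : ∀ S : Finset α, (U ∩ S.image p).card = (V ∩ S).card := by
    intro S
    rw [← hVU, ← Finset.image_inter _ _ hpinj, Finset.card_image_of_injective _ hpinj]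
  have hVc : ∀ S : Finset α, (V ∩ S.image p).card = (U ∩ S).card := by
    intro S
    rw [← hUV, ← Finset.image_inter _ _ hpinj, Finset.card_image_of_injective _ hpinj]
  set σ : Finset α ≃ Finset α := (hinv.toPerm p).finsetCongr with hσ
  have hσapp : ∀ S : Finset α, σ S = S.image p := by
    intro S
    rw [hσ, Equiv.finsetCongr_apply, Finset.map_eq_image]
    rfl
  set g : Finset α → ℝ := fun S => (f (U ∩ S).card S.card - f (V ∩ S).card S.card) * P S
    with hg
  have hre : ∑ S : Finset α, g S = ∑ S : Finset α, g (σ S) := (Equiv.sum_comp σ g).symm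
  have hgσ : ∀ S : Finset α,
      g (σ S) = -(f (U ∩ S).card S.card - f (V ∩ S).card S.card) * P (σ S) := by
    intro S
    simp only [hg]
    rw [hσapp, hUc, hVc, hcardS]
    ring
  -- so 2 * total = sum of term * (P S - P (σ S))
  have htwo : (2 : ℝ) * ∑ S : Finset α, g S
      = ∑ S : Finset α,
        (f (U ∩ S).card S.card - f (V ∩ S).card S.card) * (P S - P (σ S)) := by
    have : ∑ S : Finset α, g S + ∑ S : Finset α, g (σ S)
        = ∑ S : Finset α,
          (f (U ∩ S).card S.card - f (V ∩ S).card S.card) * (P S - P (σ S)) := by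
      rw [← Finset.sum_add_distrib]
      apply Finset.sum_congr rfl
      intro S _
      rw [hgσ S]
      simp only [hg]
      ring
    linarith [hre, this]
  -- comparison of P S and P (σ S)
  have hPlt : ∀ S : Finset α, (V ∩ S).card < (U ∩ S).card → P (σ S) < P S := by
    intro S hlt
    apply (hmono S (σ S)).mpr
    have h1 : d S U < d (σ S) U := by
      apply hsim S (σ S) U
      · rw [hσapp, hcardS]
      · rw [hσapp]
        rw [Finset.inter_comm (S.image p) U, Finset.inter_comm S U]
        rw [hUc]
        exact hlt
    rw [hmetric.2.2.1 U S, hmetric.2.2.1 U (σ S)]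
    exact h1
  have hPgt : ∀ S : Finset α, (U ∩ S).card < (V ∩ S).card → P S < P (σ S) := by
    intro S hlt
    apply (hmono (σ S) S).mpr
    have h1 : d (σ S) U < d S U := by
      apply hsim (σ S) S U
      · rw [hσapp, hcardS]
      · rw [Finset.inter_comm (σ S) U, Finset.inter_comm S U, hσapp, hUc]
        exact hlt
    rw [hmetric.2.2.1 U S, hmetric.2.2.1 U (σ S)]
    exact h1
  -- termwise nonnegativity
  have hnonneg : ∀ S : Finset α,
      0 ≤ (f (U ∩ S).card S.card - f (V ∩ S).card S.card) * (P S - P (σ S)) := by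
    intro S
    rcases lt_trichotomy (U ∩ S).card (V ∩ S).card with h | h | h
    · have := hf S.card _ _ h.le
      have := hPgt S h
      nlinarith
    · rw [h]; simp
    · apply mul_nonneg
      · linarith [hf S.card _ _ h.le]
      · linarith [hPlt S h]
  -- positive witness
  obtain ⟨S₀, hS₀⟩ := hnontrivial U V hU hV (Ne.symm hne)
  have hlt₀ : (V ∩ S₀).card < (U ∩ S₀).card := by
    by_contra hc
    push_neg at hc
    exact absurd (hf S₀.card _ _ hc) (not_le.mpr hS₀)
  have hpos : 0 < (f (U ∩ S₀).card S₀.card - f (V ∩ S₀).card S₀.card)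
      * (P S₀ - P (σ S₀)) := by
    apply mul_pos
    · linarith
    · linarith [hPlt S₀ hlt₀]
  have hsum : 0 < ∑ S : Finset α,
      (f (U ∩ S).card S.card - f (V ∩ S).card S.card) * (P S - P (σ S)) :=
    Finset.sum_pos' (fun S _ => hnonneg S) ⟨S₀, Finset.mem_univ _, hpos⟩
  linarith [htwo]
end

section
/- Let f : ℕ × ℕ → ℝ with f(k,k) = f(k−1,k), and let U, V be k-subsets of a finite set A with |U ∩ V| = k−1, say U \ V = {a} and V \ U = {b}. Let μ be the (U,V)-bijection swapping a and b. Then for every S ⊆ A, f(|U∩S|,|S|) − f(|V∩S|,|S|) = −(f(|U∩μ(S)|,|μ(S)|) − f(|V∩μ(S)|,|μ(S)|)). In particular, under the uniform distribution over subsets S ⊆ A the random variable f(|U∩S|,|S|) − f(|V∩S|,|S|) is symmetrically distributed around 0. -/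
theorem stmt15 {α : Type*} [Fintype α] [DecidableEq α] (k : ℕ) (hk : 1 ≤ k)
    (f : ℕ → ℕ → ℝ) (hf : f k k = f (k - 1) k)
    (U V : Finset α) (hU : U.card = k) (hV : V.card = k)
    (a b : α) (ha : U \ V = {a}) (hb : V \ U = {b}) :
    (∀ S : Finset α,
      f (U ∩ S).card S.card - f (V ∩ S).card S.card =
        -(f (U ∩ S.image (Equiv.swap a b)).card (S.image (Equiv.swap a b)).card -
          f (V ∩ S.image (Equiv.swap a b)).card (S.image (Equiv.swap a b)).card)) ∧
    -- under the uniform distribution over subsets, the score difference is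
    -- symmetrically distributed around 0
    (∀ t : ℝ,
      {S : Finset α | f (U ∩ S).card S.card - f (V ∩ S).card S.card = t}.ncard =
      {S : Finset α | f (U ∩ S).card S.card - f (V ∩ S).card S.card = -t}.ncard) := by
  set σ := Equiv.swap a b with hσdef
  have ha' : a ∈ U ∧ a ∉ V := by
    have := ha ▸ Finset.mem_singleton_self a
    simpa [Finset.mem_sdiff] using this
  have hb' : b ∈ V ∧ b ∉ U := by
    have := hb ▸ Finset.mem_singleton_self b
    simpa [Finset.mem_sdiff] using this
  have hab : a ≠ b := fun h => ha'.2 (h ▸ hb'.1)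
  have hmem : ∀ x, x ≠ a → x ≠ b → (x ∈ U ↔ x ∈ V) := by
    intro x hxa hxb
    constructor
    · intro hx
      by_contra hxv
      have : x ∈ U \ V := Finset.mem_sdiff.2 ⟨hx, hxv⟩
      rw [ha, Finset.mem_singleton] at this
      exact hxa this
    · intro hx
      by_contra hxu
      have : x ∈ V \ U := Finset.mem_sdiff.2 ⟨hx, hxu⟩
      rw [hb, Finset.mem_singleton] at this
      exact hxb this
  have himg : ∀ (W : Finset α) (x : α), x ∈ W.image σ ↔ σ x ∈ W := by
    intro W x
    rw [Finset.mem_image]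
    constructor
    · rintro ⟨y, hy, rfl⟩
      simpa [hσdef, Equiv.swap_apply_self] using hy
    · intro h
      exact ⟨σ x, h, by simp [hσdef, Equiv.swap_apply_self]⟩
  have hσU : U.image σ = V := by
    ext x
    rw [himg]
    by_cases hxa : x = a
    · subst hxa
      simp [hσdef, Equiv.swap_apply_left, hb'.2, ha'.2]
    by_cases hxb : x = b
    · subst hxb
      simp [hσdef, Equiv.swap_apply_right, ha'.1, hb'.1]
    · rw [Equiv.swap_apply_of_ne_of_ne hxa hxb]
      exact hmem x hxa hxb
  have hσV : V.image σ = U := by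
    ext x
    rw [himg]
    by_cases hxa : x = a
    · subst hxa
      simp [hσdef, Equiv.swap_apply_left, hb'.1, ha'.1]
    by_cases hxb : x = b
    · subst hxb
      simp [hσdef, Equiv.swap_apply_right, ha'.2, hb'.2]
    · rw [Equiv.swap_apply_of_ne_of_ne hxa hxb]
      exact (hmem x hxa hxb).symm
  have hinj : Function.Injective σ := σ.injective
  have hcard1 : ∀ S : Finset α, (U ∩ S.image σ).card = (V ∩ S).card := by
    intro S
    rw [← hσV, ← Finset.image_inter _ _ hinj, Finset.card_image_of_injective _ hinj]
  have hcard2 : ∀ S : Finset α, (V ∩ S.image σ).card = (U ∩ S).card := by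
    intro S
    rw [← hσU, ← Finset.image_inter _ _ hinj, Finset.card_image_of_injective _ hinj]
  have hcard3 : ∀ S : Finset α, (S.image σ).card = S.card := fun S =>
    Finset.card_image_of_injective _ hinj
  have part1 : ∀ S : Finset α,
      f (U ∩ S).card S.card - f (V ∩ S).card S.card =
        -(f (U ∩ S.image σ).card (S.image σ).card -
          f (V ∩ S.image σ).card (S.image σ).card) := by
    intro S
    rw [hcard1, hcard2, hcard3]
    ring
  refine ⟨part1, ?_⟩
  intro t
  set d : Finset α → ℝ := fun S => f (U ∩ S).card S.card - f (V ∩ S).card S.card with hd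
  have hdneg : ∀ S : Finset α, d (S.image σ) = - d S := by
    intro S
    have := part1 S
    simp only [hd] at *
    linarith
  have hinvol : ∀ S : Finset α, (S.image σ).image σ = S := by
    intro S
    rw [Finset.image_image]
    have : (σ ∘ σ) = id := by
      funext x
      simp [hσdef, Equiv.swap_apply_self]
    rw [this, Finset.image_id]
  have hinjS : Function.Injective (fun S : Finset α => S.image σ) := by
    intro S T h
    have := congrArg (fun W : Finset α => W.image σ) h
    simpa [hinvol] using this
  have hset : {S : Finset α | d S = t} = (fun S : Finset α => S.image σ) '' {S : Finset α | d S = -t} := by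
    ext S
    simp only [Set.mem_setOf_eq, Set.mem_image]
    constructor
    · intro hS
      refine ⟨S.image σ, ?_, hinvol S⟩
      rw [hdneg S, hS]
    · rintro ⟨T, hT, rfl⟩
      rw [hdneg T, hT]
      ring
  rw [hset, Set.ncard_image_of_injective _ hinjS]
end
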